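/- (Full high-energy expansion of the coefficient vector q, d=3; formula (4.21), refining Theorem 3.4 for d=3.) For every M ∈ ℕ there exist constants C > 0 and κ₀ > 0 such that for all κ ≥ κ₀ the matrix A(κ) is invertible and for all k ∈ ℝ³ with |k| = κ and all j ∈ {1,…,n} one has |q_j(k) + 4πi κ^{−1} Σ_{m=0}^M (−4πi)^m κ^{−m} Σ_{j'=1}^n [W(κ)^m]_{jj'} e^{i k·y_{j'}}| ≤ C κ^{−M−2}. In particular q_j(k) = −4πi κ^{−1} e^{ik·y_j} − 16π² κ^{−2} ( α_j e^{ik·y_j} − Σ_{j'≠j} e^{iκ|y_j−y_{j'}|} e^{ik·y_{j'}}/(4π|y_j−y_{j'}|) ) + O(κ^{−3}) as κ → +∞. -/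

import Mathlib

open Complex Finset Matrix

noncomputable section

/-- The matrix `A(κ)` for a three-dimensional multipoint potential:
`A(κ)_{jj} = α_j - iκ/(4π)`,
`A(κ)_{jj'} = -e^{iκ‖y_j - y_{j'}‖}/(4π‖y_j - y_{j'}‖)` for `j ≠ j'`. -/
def A3 (n : ℕ) (y : Fin n → EuclideanSpace ℝ (Fin 3)) (α : Fin n → ℂ) (κ : ℝ) :
    Matrix (Fin n) (Fin n) ℂ :=
  fun j j' =>
    if j = j' then α j - Complex.I * κ / (4 * Real.pi)
    else -Complex.exp (Complex.I * κ * ‖y j - y j'‖) / (4 * Real.pi * ‖y j - y j'‖)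

/-- `q(k) = A(κ)⁻¹ b(k)` with `b(k)_j = -e^{i k·y_j}`. -/
def q3 (n : ℕ) (y : Fin n → EuclideanSpace ℝ (Fin 3)) (α : Fin n → ℂ) (κ : ℝ)
    (k : EuclideanSpace ℝ (Fin 3)) : Fin n → ℂ :=
  (A3 n y α κ)⁻¹ *ᵥ fun j => -Complex.exp (Complex.I * (inner ℝ k (y j) : ℝ))

/-- The scattering amplitude `f(k,ℓ) = (2π)⁻³ Σ_j q_j(k) e^{-iℓ·y_j}`. -/
def f3 (n : ℕ) (y : Fin n → EuclideanSpace ℝ (Fin 3)) (α : Fin n → ℂ) (κ : ℝ)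
    (k ℓ : EuclideanSpace ℝ (Fin 3)) : ℂ :=
  ((2 * Real.pi : ℂ) ^ 3)⁻¹ *
    ∑ j, q3 n y α κ k j * Complex.exp (-Complex.I * (inner ℝ ℓ (y j) : ℝ))

/-- The matrix `W(κ)`: `W(κ)_{jj} = α_j`,
`W(κ)_{jj'} = -e^{iκ‖y_j - y_{j'}‖}/(4π‖y_j - y_{j'}‖)` for `j ≠ j'`. -/
def W3 (n : ℕ) (y : Fin n → EuclideanSpace ℝ (Fin 3)) (α : Fin n → ℂ) (κ : ℝ) :
    Matrix (Fin n) (Fin n) ℂ :=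
  fun j j' =>
    if j = j' then α j
    else -Complex.exp (Complex.I * κ * ‖y j - y j'‖) / (4 * Real.pi * ‖y j - y j'‖)

/-- The coefficients `C_m(k,ℓ) = Σ_{j,j'} [W(κ)^m]_{jj'} e^{i(k·y_{j'} - ℓ·y_j)}`. -/
def C3coef (n : ℕ) (y : Fin n → EuclideanSpace ℝ (Fin 3)) (α : Fin n → ℂ) (κ : ℝ)
    (m : ℕ) (k ℓ : EuclideanSpace ℝ (Fin 3)) : ℂ :=
  ∑ j, ∑ j', (W3 n y α κ ^ m) j j' *
    Complex.exp (Complex.I * ((inner ℝ k (y j') : ℝ) - (inner ℝ ℓ (y j) : ℝ)))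

/-!
Since `A(κ) = W(κ) - (iκ/4π)·1`, we have `A(κ) = c (1 - x)` with `c = -iκ/(4π)` and
`x = -c⁻¹ W(κ)`. The off-diagonal entries of `W(κ)` only change phase with `κ`, so `‖W(κ)‖` is
independent of `κ` and `‖x‖ = O(1/κ)`. Truncating the Neumann series of `(1 - x)⁻¹` after `M + 1`
terms leaves an error of size `O(‖x‖^(M+1))`, hence `A(κ)⁻¹ = c⁻¹ Σ_{m ≤ M} (-c⁻¹)^m W(κ)^m +
O(κ^{-M-2})`; applying this to the plane wave `b(k)`, whose entries have modulus one, gives the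
expansion of `q(k)`.
-/

open scoped Ring

theorem norm_inverse_one_sub_sub_geom_sum_le {R : Type*} [NormedRing R] [HasSummableGeomSeries R]
    {x : R} (hx : ‖x‖ < 1) {N : ℕ} (hN : N ≠ 0) :
    ‖(1 - x)⁻¹ʳ - ∑ m ∈ range N, x ^ m‖ ≤ ‖x‖ ^ N / (1 - ‖x‖) := by
  rw [← geom_series_eq_inverse x hx,
    ← (summable_geometric_of_norm_lt_one hx).sum_add_tsum_nat_add N, add_sub_cancel_left]
  refine tsum_of_norm_bounded ?_ fun m => norm_pow_le' x (by omega)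
  simpa [pow_add, mul_comm, div_eq_mul_inv] using
    (hasSum_geometric_of_lt_one (norm_nonneg x) hx).mul_left (‖x‖ ^ N)

theorem Ring.inverse_smul_of_isUnit {𝕜 R : Type*} [Field 𝕜] [Semiring R] [Algebra 𝕜 R] {c : 𝕜}
    (hc : c ≠ 0) {a : R} (ha : IsUnit a) : (c • a)⁻¹ʳ = c⁻¹ • a⁻¹ʳ := by
  have hca : IsUnit (c • a) := ha.smul (Units.mk0 c hc)
  rw [← mul_one (c • a)⁻¹ʳ, Ring.inverse_mul_eq_iff_eq_mul _ _ _ hca, smul_mul_smul_comm,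
    mul_inv_cancel₀ hc, Ring.mul_inverse_cancel a ha, one_smul]

theorem norm_inverse_add_smul_one_sub_le {𝕜 R : Type*} [NormedField 𝕜] [NormedRing R]
    [NormedAlgebra 𝕜 R] [HasSummableGeomSeries R] {c : 𝕜} (hc : c ≠ 0) {w : R}
    (hw : 2 * ‖w‖ ≤ ‖c‖) {N : ℕ} (hN : N ≠ 0) :
    IsUnit (w + c • 1) ∧
      ‖(w + c • 1)⁻¹ʳ - c⁻¹ • ∑ m ∈ range N, (-c⁻¹) ^ m • w ^ m‖ ≤
        2 * ‖c⁻¹‖ ^ (N + 1) * ‖w‖ ^ N := by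
  set x := (-c⁻¹) • w
  have hfactor : w + c • 1 = c • (1 - x) := by
    rw [smul_sub, smul_smul, mul_neg, mul_inv_cancel₀ hc, neg_one_smul, sub_neg_eq_add, add_comm]
  have hxnorm : ‖x‖ = ‖c⁻¹‖ * ‖w‖ := by rw [norm_smul, norm_neg]
  have hxhalf : ‖x‖ ≤ 1 / 2 := by
    rw [hxnorm, norm_inv, inv_mul_le_iff₀ (norm_pos_iff.2 hc)]
    linarith
  have hunit : IsUnit (1 - x) := isUnit_one_sub_of_norm_lt_one (by linarith)
  rw [hfactor]
  refine ⟨hunit.smul (Units.mk0 c hc), ?_⟩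
  have hgeom : ∑ m ∈ range N, (-c⁻¹) ^ m • w ^ m = ∑ m ∈ range N, x ^ m := by
    simp only [x, smul_pow]
  rw [Ring.inverse_smul_of_isUnit hc hunit, hgeom, ← smul_sub, norm_smul]
  calc ‖c⁻¹‖ * ‖(1 - x)⁻¹ʳ - ∑ m ∈ range N, x ^ m‖
      ≤ ‖c⁻¹‖ * (‖x‖ ^ N / (1 - ‖x‖)) := by
        gcongr
        exact norm_inverse_one_sub_sub_geom_sum_le (by linarith) hN
    _ ≤ ‖c⁻¹‖ * (2 * ‖x‖ ^ N) := by
        gcongr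
        rw [div_le_iff₀ (by linarith)]
        nlinarith [pow_nonneg (norm_nonneg x) N]
    _ = 2 * ‖c⁻¹‖ ^ (N + 1) * ‖w‖ ^ N := by rw [hxnorm]; ring

attribute [local instance] Matrix.linftyOpNormedAddCommGroup Matrix.linftyOpNormedRing
  Matrix.linftyOpNormedAlgebra

theorem Matrix.linfty_opNorm_congr {m n α : Type*} [Fintype m] [Fintype n]
    [NormedAddCommGroup α] {A B : Matrix m n α} (h : ∀ i j, ‖A i j‖₊ = ‖B i j‖₊) :
    ‖A‖ = ‖B‖ := by
  simp only [linfty_opNorm_def, h]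

theorem smul_sum_smul_pow_mulVec_apply {ι R : Type*} [Fintype ι] [DecidableEq ι] [CommSemiring R]
    (a d : R) (P : Matrix ι ι R) (N : ℕ) (v : ι → R) (j : ι) :
    ((a • ∑ m ∈ range N, d ^ m • P ^ m) *ᵥ v) j =
      a * ∑ m ∈ range N, d ^ m * ∑ j', (P ^ m) j j' * v j' := by
  simp only [smul_mulVec, sum_mulVec, Pi.smul_apply, Finset.sum_apply, smul_eq_mul]
  simp [mulVec, dotProduct, Finset.mul_sum]

theorem norm_planeWave_le {n : ℕ} (k : EuclideanSpace ℝ (Fin 3))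
    (y : Fin n → EuclideanSpace ℝ (Fin 3)) :
    ‖fun j => exp (I * (inner ℝ k (y j) : ℝ))‖ ≤ 1 :=
  (pi_norm_le_iff_of_nonneg zero_le_one).2 fun _ => (norm_exp_I_mul_ofReal _).le

theorem inv_neg_I_mul_div (κ : ℝ) : (-(I * κ / (4 * Real.pi)))⁻¹ = 4 * Real.pi * I / κ := by
  rw [inv_neg, inv_div, mul_comm I, div_mul_eq_div_div, div_I]
  ring

section

variable (n : ℕ) (y : Fin n → EuclideanSpace ℝ (Fin 3)) (α : Fin n → ℂ)

theorem A3_eq_W3_add_smul_one (κ : ℝ) :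
    A3 n y α κ = W3 n y α κ + (-(I * κ / (4 * Real.pi))) • 1 := by
  ext j j'
  by_cases h : j = j' <;> simp [A3, W3, h, sub_eq_add_neg]

theorem norm_W3_eq (κ : ℝ) : ‖W3 n y α κ‖ = ‖W3 n y α 0‖ := by
  refine Matrix.linfty_opNorm_congr fun j j' => NNReal.eq ?_
  by_cases h : j = j'
  · simp [W3, h]
  · simp only [W3, if_neg h, nnnorm_neg, nnnorm_div, mul_assoc I, ← ofReal_mul, coe_nnnorm,
      norm_exp_I_mul_ofReal, NNReal.coe_div]

theorem A3_inverse_sub_neumann_le {κ : ℝ} (hκ : 0 < κ) (hκW : 8 * Real.pi * ‖W3 n y α 0‖ ≤ κ)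
    {N : ℕ} (hN : N ≠ 0) :
    IsUnit (A3 n y α κ) ∧
      ‖(A3 n y α κ)⁻¹ʳ - (4 * Real.pi * I / κ : ℂ) •
          ∑ m ∈ range N, (-(4 * Real.pi * I / κ : ℂ)) ^ m • W3 n y α κ ^ m‖ ≤
        2 * (4 * Real.pi / κ) ^ (N + 1) * ‖W3 n y α 0‖ ^ N := by
  have hcinvnorm : ‖(4 * Real.pi * I / κ : ℂ)‖ = 4 * Real.pi / κ := by
    simp [abs_of_pos hκ, abs_of_pos Real.pi_pos]
  have hc : -(I * κ / (4 * Real.pi)) ≠ 0 := by simp [hκ.ne', Real.pi_ne_zero]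
  have hW : 2 * ‖W3 n y α κ‖ ≤ ‖-(I * κ / (4 * Real.pi))‖ := by
    rw [← inv_inv (-(I * κ / (4 * Real.pi))), norm_inv, inv_neg_I_mul_div, hcinvnorm, norm_W3_eq,
      inv_div, le_div_iff₀ (by positivity)]
    linarith
  simpa only [← A3_eq_W3_add_smul_one, inv_neg_I_mul_div, hcinvnorm, norm_W3_eq] using
    norm_inverse_add_smul_one_sub_le hc hW hN

theorem q3_expansion (M : ℕ) :
    ∃ C > (0 : ℝ), ∃ κ₀ > (0 : ℝ), ∀ κ ≥ κ₀, IsUnit (A3 n y α κ) ∧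
      ∀ k : EuclideanSpace ℝ (Fin 3), ‖k‖ = κ → ∀ j : Fin n,
        ‖q3 n y α κ k j +
            4 * (Real.pi : ℂ) * Complex.I / (κ : ℂ) *
              ∑ m ∈ Finset.range (M + 1),
                (-4 * (Real.pi : ℂ) * Complex.I) ^ m / (κ : ℂ) ^ m *
                  ∑ j' : Fin n, (W3 n y α κ ^ m) j j' *
                    Complex.exp (Complex.I * (inner ℝ k (y j') : ℝ))‖ ≤
          C / κ ^ (M + 2) := by
  set B := ‖W3 n y α 0‖
  refine ⟨2 * (4 * Real.pi) ^ (M + 2) * B ^ (M + 1) + 1, by positivity,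
    max 1 (8 * Real.pi * B), by positivity, fun κ hκ => ?_⟩
  have hκpos : 0 < κ := lt_of_lt_of_le one_pos (le_trans (le_max_left _ _) hκ)
  obtain ⟨hunit, hbound⟩ := A3_inverse_sub_neumann_le n y α hκpos
    (le_trans (le_max_right _ _) hκ) (N := M + 1) (by omega)
  refine ⟨hunit, fun k _ j => ?_⟩
  set e : Fin n → ℂ := fun j => exp (I * (inner ℝ k (y j) : ℝ))
  set E := (4 * Real.pi * I / κ : ℂ) •
    ∑ m ∈ range (M + 1), (-(4 * Real.pi * I / κ : ℂ)) ^ m • W3 n y α κ ^ m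
  have hentry : q3 n y α κ k j + 4 * (Real.pi : ℂ) * I / (κ : ℂ) *
      ∑ m ∈ range (M + 1), (-4 * (Real.pi : ℂ) * I) ^ m / (κ : ℂ) ^ m *
        ∑ j' : Fin n, (W3 n y α κ ^ m) j j' * e j' = (((A3 n y α κ)⁻¹ʳ - E) *ᵥ -e) j := by
    rw [sub_mulVec, Pi.sub_apply, mulVec_neg e E, Pi.neg_apply, sub_neg_eq_add,
      smul_sum_smul_pow_mulVec_apply, q3, nonsing_inv_eq_ringInverse]
    simp only [← div_pow, neg_mul, neg_div]
    rfl
  rw [hentry]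
  calc ‖(((A3 n y α κ)⁻¹ʳ - E) *ᵥ -e) j‖ ≤ ‖((A3 n y α κ)⁻¹ʳ - E) *ᵥ -e‖ := norm_le_pi_norm _ j
    _ ≤ ‖(A3 n y α κ)⁻¹ʳ - E‖ * ‖-e‖ := linfty_opNorm_mulVec _ _
    _ ≤ 2 * (4 * Real.pi / κ) ^ (M + 2) * B ^ (M + 1) * 1 := by
        rw [norm_neg]
        gcongr
        exact norm_planeWave_le k y
    _ ≤ _ := by
        rw [mul_one, div_pow, mul_div_assoc', div_mul_eq_mul_div]
        gcongr
        linarith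

theorem sum_W3_mul (κ : ℝ) (v : Fin n → ℂ) (j : Fin n) :
    ∑ j', W3 n y α κ j j' * v j' =
      α j * v j - ∑ j' : Fin n, if j' = j then 0 else
        Complex.exp (Complex.I * κ * ‖y j - y j'‖) * v j' / (4 * (Real.pi : ℂ) * ‖y j - y j'‖) := by
  rw [eq_sub_iff_add_eq, ← Fintype.sum_ite_eq' j (fun _ => α j * v j), ← sum_add_distrib]
  refine sum_congr rfl fun j' _ => ?_
  by_cases h : j' = j
  · simp [W3, h]
  · simp only [W3, if_neg (Ne.symm h), if_neg h]
    ring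

theorem expansion_range_two_eq (κ : ℝ) (v : Fin n → ℂ) (j : Fin n) :
    4 * (Real.pi : ℂ) * Complex.I / (κ : ℂ) *
        ∑ m ∈ Finset.range (1 + 1),
          (-4 * (Real.pi : ℂ) * Complex.I) ^ m / (κ : ℂ) ^ m *
            ∑ j' : Fin n, (W3 n y α κ ^ m) j j' * v j' =
      4 * (Real.pi : ℂ) * Complex.I / (κ : ℂ) * v j +
        16 * (Real.pi : ℂ) ^ 2 / (κ : ℂ) ^ 2 *
          (α j * v j - ∑ j' : Fin n, if j' = j then 0 else
            Complex.exp (Complex.I * κ * ‖y j - y j'‖) * v j' /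
              (4 * (Real.pi : ℂ) * ‖y j - y j'‖)) := by
  simp only [sum_range_succ, sum_range_zero, zero_add, pow_zero, pow_one, one_apply, ite_mul,
    one_mul, zero_mul, Fintype.sum_ite_eq, div_one]
  rw [← sum_W3_mul]
  linear_combination -(16 * (Real.pi : ℂ) ^ 2 / (κ : ℂ) ^ 2 *
    ∑ j', W3 n y α κ j j' * v j') * I_sq

end

theorem stmt8_general (n : ℕ) (y : Fin n → EuclideanSpace ℝ (Fin 3)) (α : Fin n → ℂ) :
    (∀ M : ℕ, ∃ C > (0 : ℝ), ∃ κ₀ > (0 : ℝ), ∀ κ ≥ κ₀, IsUnit (A3 n y α κ) ∧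
      ∀ k : EuclideanSpace ℝ (Fin 3), ‖k‖ = κ → ∀ j : Fin n,
        ‖q3 n y α κ k j +
            4 * (Real.pi : ℂ) * Complex.I / (κ : ℂ) *
              ∑ m ∈ Finset.range (M + 1),
                (-4 * (Real.pi : ℂ) * Complex.I) ^ m / (κ : ℂ) ^ m *
                  ∑ j' : Fin n, (W3 n y α κ ^ m) j j' *
                    Complex.exp (Complex.I * (inner ℝ k (y j') : ℝ))‖ ≤
          C / κ ^ (M + 2)) ∧
    (∃ C > (0 : ℝ), ∃ κ₀ > (0 : ℝ), ∀ κ ≥ κ₀, IsUnit (A3 n y α κ) ∧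
      ∀ k : EuclideanSpace ℝ (Fin 3), ‖k‖ = κ → ∀ j : Fin n,
        ‖q3 n y α κ k j +
            4 * (Real.pi : ℂ) * Complex.I / (κ : ℂ) *
              Complex.exp (Complex.I * (inner ℝ k (y j) : ℝ)) +
            16 * (Real.pi : ℂ) ^ 2 / (κ : ℂ) ^ 2 *
              (α j * Complex.exp (Complex.I * (inner ℝ k (y j) : ℝ)) -
                ∑ j' : Fin n, if j' = j then 0 else
                  Complex.exp (Complex.I * κ * ‖y j - y j'‖) *
                      Complex.exp (Complex.I * (inner ℝ k (y j') : ℝ)) /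
                    (4 * (Real.pi : ℂ) * ‖y j - y j'‖))‖ ≤
          C / κ ^ 3) := by
  refine ⟨q3_expansion n y α, ?_⟩
  obtain ⟨C, hC, κ₀, hκ₀, h⟩ := q3_expansion n y α 1
  refine ⟨C, hC, κ₀, hκ₀, fun κ hκ => ⟨(h κ hκ).1, fun k hk j => ?_⟩⟩
  simpa only [expansion_range_two_eq, ← add_assoc] using (h κ hκ).2 k hk j

/-- Full high-energy expansion of the coefficient vector q, d = 3 (formula (4.21)),
together with its leading-order particular case. -/
theorem stmt8 (n : ℕ) (y : Fin n → EuclideanSpace ℝ (Fin 3)) (α : Fin n → ℂ)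
    (hy : Function.Injective y) :
    (∀ M : ℕ, ∃ C > (0 : ℝ), ∃ κ₀ > (0 : ℝ), ∀ κ ≥ κ₀, IsUnit (A3 n y α κ) ∧
      ∀ k : EuclideanSpace ℝ (Fin 3), ‖k‖ = κ → ∀ j : Fin n,
        ‖q3 n y α κ k j +
            4 * (Real.pi : ℂ) * Complex.I / (κ : ℂ) *
              ∑ m ∈ Finset.range (M + 1),
                (-4 * (Real.pi : ℂ) * Complex.I) ^ m / (κ : ℂ) ^ m *
                  ∑ j' : Fin n, (W3 n y α κ ^ m) j j' *
                    Complex.exp (Complex.I * (inner ℝ k (y j') : ℝ))‖ ≤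
          C / κ ^ (M + 2)) ∧
    (∃ C > (0 : ℝ), ∃ κ₀ > (0 : ℝ), ∀ κ ≥ κ₀, IsUnit (A3 n y α κ) ∧
      ∀ k : EuclideanSpace ℝ (Fin 3), ‖k‖ = κ → ∀ j : Fin n,
        ‖q3 n y α κ k j +
            4 * (Real.pi : ℂ) * Complex.I / (κ : ℂ) *
              Complex.exp (Complex.I * (inner ℝ k (y j) : ℝ)) +
            16 * (Real.pi : ℂ) ^ 2 / (κ : ℂ) ^ 2 *
              (α j * Complex.exp (Complex.I * (inner ℝ k (y j) : ℝ)) -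
                ∑ j' : Fin n, if j' = j then 0 else
                  Complex.exp (Complex.I * κ * ‖y j - y j'‖) *
                      Complex.exp (Complex.I * (inner ℝ k (y j') : ℝ)) /
                    (4 * (Real.pi : ℂ) * ‖y j - y j'‖))‖ ≤
          C / κ ^ 3) :=
  stmt8_general n y α
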